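/- Let G be a reflexive digraph admitting an Olšák polymorphism o, and let a, b, c, d be vertices of G with a → b, b → a, b → c, c → d, d → c, and d → a. Then a and c lie in the same D-component of G. -/

import Mathlib

namespace DigraphHM7

/-- `f` is a polymorphism of the digraph `(V, E)`. -/
def IsPoly {V : Type*} (E : V → V → Prop) {n : ℕ} (f : (Fin n → V) → V) : Prop :=
  ∀ a b : Fin n → V, (∀ i, E (a i) (b i)) → E (f a) (f b)

/-- `f` is idempotent. -/
def IsIdem {V : Type*} {n : ℕ} (f : (Fin n → V) → V) : Prop :=
  ∀ x : V, f (fun _ => x) = x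

/-- `o` is an Olšák operation: a 6-ary idempotent operation satisfying
`o(x,x,x,y,y,y) = o(x,y,y,x,x,y) = o(y,x,y,x,y,x)`. -/
def IsOlsak {V : Type*} (o : (Fin 6 → V) → V) : Prop :=
  IsIdem o ∧ ∀ x y : V,
    o ![x, x, x, y, y, y] = o ![x, y, y, x, x, y] ∧
    o ![x, y, y, x, x, y] = o ![y, x, y, x, y, x]

/-- `φ` is a digraph homomorphism from `(W, EH)` to `(V, EG)`. -/
def IsHom {W V : Type*} (EH : W → W → Prop) (EG : V → V → Prop) (φ : W → V) : Prop :=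
  ∀ u v : W, EH u v → EG (φ u) (φ v)

/-- The `H`-equivalence of `G`: the equivalence relation generated by the relation
holding between `g` and `g'` whenever they both lie in the range of a homomorphism
from `H` to `G`. -/
def HEqv {W V : Type*} (EH : W → W → Prop) (EG : V → V → Prop) : V → V → Prop :=
  Relation.EqvGen (fun g g' =>
    ∃ φ : W → V, IsHom EH EG φ ∧ (∃ u, φ u = g) ∧ (∃ v, φ v = g'))

/-- The reflexive digraph `D` on `{0,1,2}` with non-loop edges
`0 → 1`, `1 → 0`, `1 → 2`, `2 → 0`. -/
def DEdge : Fin 3 → Fin 3 → Prop := fun a b =>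
  a = b ∨ (a = 0 ∧ b = 1) ∨ (a = 1 ∧ b = 0) ∨ (a = 1 ∧ b = 2) ∨ (a = 2 ∧ b = 0)

/-!
Write `z(x, y) = o(x, y, x, y, x, y)`. A two-cycle `x ⇄ y` gives the two-cycle `x ⇄ z(x, y)`, so
`a ~ z(a, b)` and `c ~ z(c, d)`. The two are joined by four images of `D` whose vertices are
values of `o` on tuples over `{a, b, c, d}`; every edge is the image under `o` of an edge of `G⁶`,
but in each triangle one of them only after rewriting an endpoint by an Olšák identity.
-/

section

variable {V : Type*} {E : V → V → Prop}

theorem hEqv_of_isHom {W : Type*} {EH : W → W → Prop} {φ : W → V} (hφ : IsHom EH E φ) (u v : W) :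
    HEqv EH E (φ u) (φ v) :=
  Relation.EqvGen.rel _ _ ⟨φ, hφ, ⟨u, rfl⟩, ⟨v, rfl⟩⟩

theorem hEqv_dEdge_of_triangle (hrefl : ∀ v, E v v) {x₀ x₁ x₂ : V}
    (h₀₁ : E x₀ x₁) (h₁₀ : E x₁ x₀) (h₁₂ : E x₁ x₂) (h₂₀ : E x₂ x₀) :
    HEqv DEdge E x₀ x₂ := by
  refine hEqv_of_isHom (φ := ![x₀, x₁, x₂]) ?_ 0 2
  rintro u v (rfl | ⟨rfl, rfl⟩ | ⟨rfl, rfl⟩ | ⟨rfl, rfl⟩ | ⟨rfl, rfl⟩)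
  exacts [hrefl _, h₀₁, h₁₀, h₁₂, h₂₀]

theorem hEqv_dEdge_of_edge_of_edge (hrefl : ∀ v, E v v) {x y : V} (hxy : E x y) (hyx : E y x) :
    HEqv DEdge E x y :=
  hEqv_dEdge_of_triangle hrefl hxy hyx (hrefl y) hyx

variable {o : (Fin 6 → V) → V}

theorem IsPoly.edge_vec6 (hpoly : IsPoly E o) {x₀ x₁ x₂ x₃ x₄ x₅ y₀ y₁ y₂ y₃ y₄ y₅ : V}
    (h₀ : E x₀ y₀) (h₁ : E x₁ y₁) (h₂ : E x₂ y₂) (h₃ : E x₃ y₃) (h₄ : E x₄ y₄) (h₅ : E x₅ y₅) :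
    E (o ![x₀, x₁, x₂, x₃, x₄, x₅]) (o ![y₀, y₁, y₂, y₃, y₄, y₅]) :=
  hpoly _ _ fun i => by fin_cases i <;> assumption

theorem IsIdem.apply_vec6 (hidem : IsIdem o) (x : V) : o ![x, x, x, x, x, x] = x := by
  convert hidem x using 2
  ext i
  fin_cases i <;> rfl

theorem hEqv_dEdge_alternating (hrefl : ∀ v, E v v) (hpoly : IsPoly E o) (hidem : IsIdem o)
    {x y : V} (hxy : E x y) (hyx : E y x) :
    HEqv DEdge E x (o ![x, y, x, y, x, y]) := by
  have h := hEqv_dEdge_of_edge_of_edge hrefl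
    (hpoly.edge_vec6 (hrefl x) hxy (hrefl x) hxy (hrefl x) hxy)
    (hpoly.edge_vec6 (hrefl x) hyx (hrefl x) hyx (hrefl x) hyx)
  rwa [hidem.apply_vec6] at h

theorem hEqv_dEdge_alternating_of_KPattern (hrefl : ∀ v, E v v) (hpoly : IsPoly E o)
    (holsak : IsOlsak o) {a b c d : V} (hab : E a b) (hba : E b a) (hbc : E b c)
    (hcd : E c d) (hdc : E d c) (hda : E d a) :
    HEqv DEdge E (o ![a, b, a, b, a, b]) (o ![c, d, c, d, c, d]) := by
  have ha := hrefl a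
  have hc := hrefl c
  have hd := hrefl d
  have hids := holsak.2
  have to_aaabbc : HEqv DEdge E (o ![a, b, a, b, a, b]) (o ![a, a, a, b, b, c]) :=
    Relation.EqvGen.symm _ _ <| hEqv_dEdge_of_triangle hrefl (x₁ := o ![a, a, a, a, a, d])
      (hpoly.edge_vec6 ha ha ha hba hba hcd) (hpoly.edge_vec6 ha ha ha hab hab hdc)
      ((hids b a).2 ▸ hpoly.edge_vec6 hab ha ha hab hab hda)
      (hpoly.edge_vec6 ha hba ha (hrefl b) hab hbc)
  have to_aaaccd : HEqv DEdge E (o ![a, a, a, b, b, c]) (o ![a, a, a, c, c, d]) :=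
    Relation.EqvGen.symm _ _ <| hEqv_dEdge_of_triangle hrefl (x₁ := o ![a, a, a, d, d, d])
      (hpoly.edge_vec6 ha ha ha hcd hcd hd) (hpoly.edge_vec6 ha ha ha hdc hdc hd)
      ((hids a d).1 ▸ hpoly.edge_vec6 ha hda hda hab hab hdc)
      (hpoly.edge_vec6 ha ha ha hbc hbc hcd)
  have to_adaccc : HEqv DEdge E (o ![a, a, a, c, c, d]) (o ![a, d, a, c, c, c]) :=
    hEqv_dEdge_of_triangle hrefl (x₁ := o ![b, b, b, d, d, d])
      (hpoly.edge_vec6 hab hab hab hcd hcd hd) (hpoly.edge_vec6 hba hba hba hdc hdc hd)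
      ((hids b d).1 ▸ hpoly.edge_vec6 hba hd hda hbc hbc hdc)
      (hpoly.edge_vec6 ha hda ha hc hc hcd)
  have to_cdcdcd : HEqv DEdge E (o ![a, d, a, c, c, c]) (o ![c, d, c, d, c, d]) :=
    hEqv_dEdge_of_triangle hrefl (x₁ := o ![b, c, b, c, c, c])
      (hpoly.edge_vec6 hab hdc hab hc hc hc) (hpoly.edge_vec6 hba hcd hba hc hc hc)
      (hpoly.edge_vec6 hbc hcd hbc hcd hc hcd)
      (((hids d c).1.trans (hids d c).2) ▸ hpoly.edge_vec6 hda hd hda hc hc hc)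
  exact to_aaabbc.trans _ _ _ <| to_aaaccd.trans _ _ _ <| to_adaccc.trans _ _ _ to_cdcdcd

end

/-- If a reflexive digraph admits an Olšák polymorphism and `a, b, c, d` are vertices
with `a → b`, `b → a`, `b → c`, `c → d`, `d → c`, `d → a`, then `a` and `c` lie in the
same `D`-component. -/
theorem dEqv_of_olsak_of_KPattern {V : Type*} (E : V → V → Prop)
    (hrefl : ∀ v, E v v) (o : (Fin 6 → V) → V)
    (hpoly : IsPoly E o) (holsak : IsOlsak o)
    (a b c d : V) (hab : E a b) (hba : E b a) (hbc : E b c)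
    (hcd : E c d) (hdc : E d c) (hda : E d a) :
    HEqv DEdge E a c := by
  have hz := hEqv_dEdge_alternating hrefl hpoly holsak.1 hab hba
  have hz' := hEqv_dEdge_alternating hrefl hpoly holsak.1 hcd hdc
  have hzz' := hEqv_dEdge_alternating_of_KPattern hrefl hpoly holsak hab hba hbc hcd hdc hda
  exact hz.trans _ _ _ (hzz'.trans _ _ _ hz'.symm)

end DigraphHM7
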